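/- Let f : ℝ^d → ℝ be twice continuously differentiable with L1-Lipschitz gradient and L2-Lipschitz Hessian, let ε₁, ε₂ ∈ (0,1), and let x₀ satisfy f(x₀) − inf f ≤ Δ < ∞. Suppose x₁ = x₀, and for every j there is a symmetric matrix H_j with ‖H_j − ∇²f(x_j)‖₂ ≤ ε₃ where 0 ≤ ε₃ ≤ ε₂/12, and a unit vector v_j with λ_min(H_j) ≥ v_jᵀH_j v_j − max(ε₂, ‖∇f(x_j)‖)/2; the update is: x_{j+1} = x_j − (ε₂/L2)·sign(v_jᵀ∇f(x_j))·v_j if −(ε₂²/(2·L2²))·v_jᵀH_j v_j − 5·ε₂³/(24·L2²) > ‖∇f(x_j)‖²/(2·L1), and x_{j+1} = x_j − (1/L1)·∇f(x_j) otherwise. Then the first index j* with v_{j*}ᵀH_{j*}v_{j*} > −ε₂/2 and ‖∇f(x_{j*})‖ ≤ ε₁ satisfies j* ≤ 1 + max(24·L2²/ε₂³, 2·L1/ε₁²)·Δ, and at termination ‖∇f(x_{j*})‖ ≤ ε₁ and λ_min(∇²f(x_{j*})) ≥ −2·max(ε₂, ε₁). -/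

import Mathlib

/-!
Every iteration that does not stop decreases `f` by at least
`δ = min (ε₂³ / (24 L2²)) (ε₁² / (2 L1))`. The gradient step gains `‖∇f‖² / (2 L1)` by the
descent lemma; the negative-curvature step of length `ε₂ / L2` gains
`-(ε₂² / (2 L2²)) ⟪H v, v⟫ - 5 ε₂³ / (24 L2²)` by the cubic Taylor bound, where the `5/24`
collects the cubic remainder and the Hessian error `ε₃ ≤ ε₂ / 12`; the algorithm takes the
better of the two, and if the test `⟪H v, v⟫ > -ε₂ / 2 ∧ ‖∇f‖ ≤ ε₁` fails one of these gains
is at least `δ`. As `f` can drop by at most `Δ` in total, the first stopping index is at most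
`1 + Δ / δ`. There `⟪H v, v⟫ > -ε₂ / 2`, so the near-minimality of `v` and
`‖H - ∇²f‖ ≤ ε₃` bound the quadratic form of `∇²f` on unit vectors from below.
-/

open scoped RealInnerProductSpace

noncomputable def sgn (t : ℝ) : ℝ := if 0 ≤ t then 1 else -1

open Set

lemma abs_sgn (t : ℝ) : |sgn t| = 1 := by
  unfold sgn; split <;> norm_num

lemma sgn_mul_self (t : ℝ) : sgn t * t = |t| := by
  rcases le_or_gt 0 t with h | h
  · rw [sgn, if_pos h, abs_of_nonneg h, one_mul]
  · rw [sgn, if_neg (not_le.2 h), abs_of_neg h, neg_one_mul]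

lemma inv_min_of_pos {a b : ℝ} (ha : 0 < a) (hb : 0 < b) : (min a b)⁻¹ = max a⁻¹ b⁻¹ := by
  rcases le_total a b with h | h
  · rw [min_eq_left h, max_eq_left (inv_anti₀ ha h)]
  · rw [min_eq_right h, max_eq_right (inv_anti₀ hb h)]

theorem le_add_of_hasDerivAt_le_quadratic {φ φ' : ℝ → ℝ} (hφ : ∀ t, HasDerivAt φ (φ' t) t)
    {a b c : ℝ} (hφ' : ∀ t ∈ Icc (0 : ℝ) 1, φ' t ≤ a + b * t + c * t ^ 2)
    {t : ℝ} (ht : t ∈ Icc (0 : ℝ) 1) :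
    φ t ≤ φ 0 + a * t + b / 2 * t ^ 2 + c / 3 * t ^ 3 := by
  have hB : ∀ s : ℝ, HasDerivAt (fun s => φ 0 + a * s + b / 2 * s ^ 2 + c / 3 * s ^ 3)
      (a + b * s + c * s ^ 2) s :=
    fun s => (((((hasDerivAt_id s).const_mul a).const_add (φ 0)).add
      ((hasDerivAt_pow 2 s).const_mul (b / 2))).add
      ((hasDerivAt_pow 3 s).const_mul (c / 3))).congr_deriv (by push_cast; ring)
  exact image_le_of_deriv_right_le_deriv_boundary
    (fun s _ => (hφ s).continuousAt.continuousWithinAt) (fun s _ => (hφ s).hasDerivWithinAt)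
    (by simp) (fun s _ => (hB s).continuousAt.continuousWithinAt)
    (fun s _ => (hB s).hasDerivWithinAt) (fun s hs => hφ' s (Ico_subset_Icc_self hs)) ht

section

variable {E : Type*} [NormedAddCommGroup E] [InnerProductSpace ℝ E]

lemma abs_inner_apply_self_sub_le (T S : E →L[ℝ] E) (w : E) :
    |⟪T w, w⟫ - ⟪S w, w⟫| ≤ ‖T - S‖ * ‖w‖ ^ 2 := by
  rw [← inner_sub_left, ← sub_apply]
  calc |⟪(T - S) w, w⟫| ≤ ‖(T - S) w‖ * ‖w‖ := abs_real_inner_le_norm _ _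
    _ ≤ ‖T - S‖ * ‖w‖ * ‖w‖ := by gcongr; exact (T - S).le_opNorm w
    _ = ‖T - S‖ * ‖w‖ ^ 2 := by ring

lemma hasDerivAt_apply_add_smul {F : Type*} [NormedAddCommGroup F] [NormedSpace ℝ F]
    {g : E → F} (hg : Differentiable ℝ g) (p u : E) (t : ℝ) :
    HasDerivAt (fun s : ℝ => g (p + s • u)) (fderiv ℝ g (p + t • u) u) t := by
  have hline : HasDerivAt (fun s : ℝ => p + s • u) u t := by
    simpa using ((hasDerivAt_id t).smul_const u).const_add p
  exact (hg _).hasFDerivAt.comp_hasDerivAt t hline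

variable [CompleteSpace E] {f : E → ℝ}

lemma ContDiff.gradient {n : WithTop ℕ∞} (hf : ContDiff ℝ (n + 1) f) :
    ContDiff ℝ n (gradient f) :=
  (InnerProductSpace.toDual ℝ E).symm.contDiff.comp (hf.fderiv_right le_rfl)

lemma hasDerivAt_apply_add_smul_of_gradient (hf : Differentiable ℝ f) (p u : E) (t : ℝ) :
    HasDerivAt (fun s : ℝ => f (p + s • u)) ⟪gradient f (p + t • u), u⟫ t := by
  simpa [gradient, InnerProductSpace.toDual_symm_apply] using hasDerivAt_apply_add_smul hf p u t

lemma hasDerivAt_inner_gradient_add_smul (hg : Differentiable ℝ (gradient f)) (p u : E) (t : ℝ) :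
    HasDerivAt (fun s : ℝ => ⟪gradient f (p + s • u), u⟫)
      ⟪fderiv ℝ (gradient f) (p + t • u) u, u⟫ t := by
  simpa using (hasDerivAt_apply_add_smul hg p u t).inner ℝ (hasDerivAt_const t u)

theorem apply_add_le_of_gradient_lipschitz {L : ℝ} (hf : Differentiable ℝ f)
    (hlip : ∀ a b : E, ‖gradient f a - gradient f b‖ ≤ L * ‖a - b‖) (p u : E) :
    f (p + u) ≤ f p + ⟪gradient f p, u⟫ + L / 2 * ‖u‖ ^ 2 := by
  have hslope : ∀ t ∈ Icc (0 : ℝ) 1,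
      ⟪gradient f (p + t • u), u⟫ ≤ ⟪gradient f p, u⟫ + L * ‖u‖ ^ 2 * t + 0 * t ^ 2 := by
    intro t ht
    have h : ⟪gradient f (p + t • u) - gradient f p, u⟫ ≤ L * ‖u‖ ^ 2 * t :=
      calc _ ≤ ‖gradient f (p + t • u) - gradient f p‖ * ‖u‖ := real_inner_le_norm _ _
        _ ≤ L * ‖t • u‖ * ‖u‖ := by gcongr; simpa using hlip (p + t • u) p
        _ = L * ‖u‖ ^ 2 * t := by rw [norm_smul, Real.norm_of_nonneg ht.1]; ring
    rw [inner_sub_left] at h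
    linarith
  have h := le_add_of_hasDerivAt_le_quadratic (hasDerivAt_apply_add_smul_of_gradient hf p u)
    hslope (right_mem_Icc.2 zero_le_one)
  simp only [one_smul, zero_smul, add_zero] at h
  linarith

theorem apply_add_le_of_hessian_lipschitz {L : ℝ} (hf : Differentiable ℝ f)
    (hg : Differentiable ℝ (gradient f))
    (hlip : ∀ a b : E, ‖fderiv ℝ (gradient f) a - fderiv ℝ (gradient f) b‖ ≤ L * ‖a - b‖)
    (p u : E) :
    f (p + u) ≤ f p + ⟪gradient f p, u⟫ + 1 / 2 * ⟪fderiv ℝ (gradient f) p u, u⟫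
      + L / 6 * ‖u‖ ^ 3 := by
  set D := fderiv ℝ (gradient f)
  have hcurv : ∀ t ∈ Icc (0 : ℝ) 1,
      ⟪D (p + t • u) u, u⟫ ≤ ⟪D p u, u⟫ + L * ‖u‖ ^ 3 * t + 0 * t ^ 2 := by
    intro t ht
    have h : ⟪D (p + t • u) u, u⟫ - ⟪D p u, u⟫ ≤ L * ‖u‖ ^ 3 * t :=
      calc _ ≤ ‖D (p + t • u) - D p‖ * ‖u‖ ^ 2 :=
            (le_abs_self _).trans (abs_inner_apply_self_sub_le _ _ u)
        _ ≤ L * ‖t • u‖ * ‖u‖ ^ 2 := by gcongr; simpa using hlip (p + t • u) p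
        _ = L * ‖u‖ ^ 3 * t := by rw [norm_smul, Real.norm_of_nonneg ht.1]; ring
    linarith
  have hslope : ∀ t ∈ Icc (0 : ℝ) 1, ⟪gradient f (p + t • u), u⟫
      ≤ ⟪gradient f p, u⟫ + ⟪D p u, u⟫ * t + L / 2 * ‖u‖ ^ 3 * t ^ 2 := by
    intro t ht
    have h := le_add_of_hasDerivAt_le_quadratic (hasDerivAt_inner_gradient_add_smul hg p u)
      hcurv ht
    simp only [zero_smul, add_zero] at h
    linarith
  have h := le_add_of_hasDerivAt_le_quadratic (hasDerivAt_apply_add_smul_of_gradient hf p u)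
    hslope (right_mem_Icc.2 zero_le_one)
  simp only [one_smul, zero_smul, add_zero] at h
  linarith

theorem apply_sub_gradient_step_le {L : ℝ} (hL : 0 < L) (hf : Differentiable ℝ f)
    (hlip : ∀ a b : E, ‖gradient f a - gradient f b‖ ≤ L * ‖a - b‖) (y : E) :
    f (y - (1 / L) • gradient f y) ≤ f y - ‖gradient f y‖ ^ 2 / (2 * L) := by
  have h := apply_add_le_of_gradient_lipschitz hf hlip y (-(1 / L) • gradient f y)
  rw [neg_smul, ← sub_eq_add_neg, inner_neg_right, real_inner_smul_right,
    real_inner_self_eq_norm_sq, norm_neg, norm_smul, Real.norm_of_nonneg (by positivity)] at h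
  have hstep : -(1 / L * ‖gradient f y‖ ^ 2) + L / 2 * (1 / L * ‖gradient f y‖) ^ 2
      = -(‖gradient f y‖ ^ 2 / (2 * L)) := by
    field_simp; ring
  linarith

theorem apply_sub_curvature_step_le {L η : ℝ} (hη : 0 ≤ η) (hf : Differentiable ℝ f)
    (hg : Differentiable ℝ (gradient f))
    (hlip : ∀ a b : E, ‖fderiv ℝ (gradient f) a - fderiv ℝ (gradient f) b‖ ≤ L * ‖a - b‖)
    (y : E) {v : E} (hv : ‖v‖ = 1) :
    f (y - (η * sgn ⟪gradient f y, v⟫) • v)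
      ≤ f y + η ^ 2 / 2 * ⟪fderiv ℝ (gradient f) y v, v⟫ + L / 6 * η ^ 3 := by
  set σ := sgn ⟪gradient f y, v⟫
  have hσ : σ ^ 2 = 1 := by rw [← sq_abs, abs_sgn, one_pow]
  have h := apply_add_le_of_hessian_lipschitz hf hg hlip y (-(η * σ) • v)
  rw [neg_smul, ← sub_eq_add_neg, inner_neg_right, real_inner_smul_right, map_neg, map_smul,
    inner_neg_left, inner_neg_right, real_inner_smul_left, real_inner_smul_right, norm_neg,
    norm_smul, hv, Real.norm_eq_abs, abs_mul, abs_sgn, abs_of_nonneg hη] at h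
  have hdescent : 0 ≤ η * σ * ⟪gradient f y, v⟫ := by
    rw [mul_assoc, sgn_mul_self]; positivity
  have hquad : η * σ * (η * σ * ⟪fderiv ℝ (gradient f) y v, v⟫)
      = η ^ 2 * ⟪fderiv ℝ (gradient f) y v, v⟫ := by
    linear_combination η ^ 2 * ⟪fderiv ℝ (gradient f) y v, v⟫ * hσ
  linarith

end

section

variable {E : Type*} [NormedAddCommGroup E] [InnerProductSpace ℝ E] [CompleteSpace E]

/-- `q` stands for the estimate `⟪H v, v⟫` of the curvature of `f` at `y` along `v`. -/
noncomputable def ncgStep (f : E → ℝ) (L1 L2 ε₂ q : ℝ) (y v : E) : E :=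
  if -(ε₂ ^ 2 / (2 * L2 ^ 2)) * q - 5 * ε₂ ^ 3 / (24 * L2 ^ 2) > ‖gradient f y‖ ^ 2 / (2 * L1) then
    y - ((ε₂ / L2) * sgn ⟪gradient f y, v⟫) • v
  else
    y - (1 / L1) • gradient f y

variable {f : E → ℝ} {L1 L2 ε₂ q : ℝ} {y v : E}

theorem apply_ncgStep_le (hL1 : 0 < L1) (hL2 : 0 < L2) (hε₂ : 0 < ε₂)
    (hf : Differentiable ℝ f) (hg : Differentiable ℝ (gradient f))
    (hglip : ∀ a b : E, ‖gradient f a - gradient f b‖ ≤ L1 * ‖a - b‖)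
    (hHlip : ∀ a b : E, ‖fderiv ℝ (gradient f) a - fderiv ℝ (gradient f) b‖ ≤ L2 * ‖a - b‖)
    (hv : ‖v‖ = 1) (hq : ⟪fderiv ℝ (gradient f) y v, v⟫ ≤ q + ε₂ / 12) :
    f (ncgStep f L1 L2 ε₂ q y v) ≤ f y -
      max (-(ε₂ ^ 2 / (2 * L2 ^ 2)) * q - 5 * ε₂ ^ 3 / (24 * L2 ^ 2))
        (‖gradient f y‖ ^ 2 / (2 * L1)) := by
  unfold ncgStep
  split_ifs with htest
  · rw [max_eq_left htest.le]
    have h := apply_sub_curvature_step_le (div_pos hε₂ hL2).le hf hg hHlip y hv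
    have hcurv := mul_le_mul_of_nonneg_left hq (by positivity : (0 : ℝ) ≤ (ε₂ / L2) ^ 2 / 2)
    have hcoeff : (ε₂ / L2) ^ 2 / 2 * (q + ε₂ / 12) + L2 / 6 * (ε₂ / L2) ^ 3
        = ε₂ ^ 2 / (2 * L2 ^ 2) * q + 5 * ε₂ ^ 3 / (24 * L2 ^ 2) := by
      field_simp; ring
    linarith
  · rw [max_eq_right (not_lt.1 htest)]
    exact apply_sub_gradient_step_le hL1 hf hglip y

theorem apply_ncgStep_le_sub_min {ε₁ : ℝ} (hL1 : 0 < L1) (hL2 : 0 < L2) (hε₁ : 0 < ε₁)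
    (hε₂ : 0 < ε₂) (hf : Differentiable ℝ f) (hg : Differentiable ℝ (gradient f))
    (hglip : ∀ a b : E, ‖gradient f a - gradient f b‖ ≤ L1 * ‖a - b‖)
    (hHlip : ∀ a b : E, ‖fderiv ℝ (gradient f) a - fderiv ℝ (gradient f) b‖ ≤ L2 * ‖a - b‖)
    (hv : ‖v‖ = 1) (hq : ⟪fderiv ℝ (gradient f) y v, v⟫ ≤ q + ε₂ / 12)
    (hcont : ¬(q > -ε₂ / 2 ∧ ‖gradient f y‖ ≤ ε₁)) :
    f (ncgStep f L1 L2 ε₂ q y v) ≤ f y - min (ε₂ ^ 3 / (24 * L2 ^ 2)) (ε₁ ^ 2 / (2 * L1)) := by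
  refine (apply_ncgStep_le hL1 hL2 hε₂ hf hg hglip hHlip hv hq).trans (sub_le_sub_left ?_ _)
  rcases not_and_or.1 hcont with hneg | hbig
  · refine (min_le_left _ _).trans (le_max_of_le_left ?_)
    have h := mul_le_mul_of_nonneg_left (not_lt.1 hneg)
      (by positivity : (0 : ℝ) ≤ ε₂ ^ 2 / (2 * L2 ^ 2))
    have hcoeff : ε₂ ^ 2 / (2 * L2 ^ 2) * (-ε₂ / 2) = -(6 * (ε₂ ^ 3 / (24 * L2 ^ 2))) := by
      field_simp; ring
    have hsplit : 5 * ε₂ ^ 3 / (24 * L2 ^ 2) = 5 * (ε₂ ^ 3 / (24 * L2 ^ 2)) := by ring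
    linarith
  · refine (min_le_right _ _).trans (le_max_of_le_right ?_)
    gcongr
    exact (not_le.1 hbig).le

end

theorem exists_first_index_le_of_descent {P : ℕ → Prop} {F : ℕ → ℝ} {δ Δ : ℝ} (hδ : 0 < δ)
    (hdesc : ∀ j, 1 ≤ j → ¬P j → F (j + 1) ≤ F j - δ) (hbdd : ∀ j, F 1 - F j ≤ Δ) :
    ∃ N, 1 ≤ N ∧ P N ∧ (∀ i, 1 ≤ i → i < N → ¬P i) ∧ (N : ℝ) ≤ 1 + Δ / δ := by
  classical
  have hsum : ∀ n : ℕ, (∀ i, 1 ≤ i → i ≤ n → ¬P i) → n * δ ≤ F 1 - F (n + 1) := by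
    intro n
    induction n with
    | zero => intro _; simp
    | succ n ih =>
      intro hn
      have h1 := ih fun i h1 h2 => hn i h1 (h2.trans n.le_succ)
      have h2 := hdesc (n + 1) n.succ_pos (hn (n + 1) n.succ_pos le_rfl)
      push_cast
      linarith
  have hex : ∃ j, 1 ≤ j ∧ P j := by
    by_contra! hnever
    obtain ⟨n, hn⟩ := exists_nat_gt (Δ / δ)
    have h := (hsum n fun i hi _ => hnever i hi).trans (hbdd (n + 1))
    rw [div_lt_iff₀ hδ] at hn
    linarith
  obtain ⟨hN1, hPN⟩ := Nat.find_spec hex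
  have hbefore : ∀ i, 1 ≤ i → i < Nat.find hex → ¬P i := fun i hi hlt hPi =>
    Nat.find_min hex hlt ⟨hi, hPi⟩
  refine ⟨Nat.find hex, hN1, hPN, hbefore, ?_⟩
  have h := (hsum (Nat.find hex - 1) fun i hi hle => hbefore i hi (by omega)).trans
    (hbdd (Nat.find hex - 1 + 1))
  rw [Nat.cast_sub hN1, Nat.cast_one, ← le_div_iff₀ hδ] at h
  linarith

theorem iH_NCG_A_guarantee_general {d : ℕ}
    (f : EuclideanSpace ℝ (Fin d) → ℝ) (L1 L2 ε₁ ε₂ ε₃ Δ : ℝ)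
    (hL1 : 0 < L1) (hL2 : 0 < L2)
    (hε₁ : 0 < ε₁) (hε₂ : 0 < ε₂)
    (hε₃ : ε₃ ≤ ε₂ / 12)
    (hf : ContDiff ℝ 2 f)
    (hglip : ∀ a b : EuclideanSpace ℝ (Fin d),
      ‖gradient f a - gradient f b‖ ≤ L1 * ‖a - b‖)
    (hHlip : ∀ a b : EuclideanSpace ℝ (Fin d),
      ‖fderiv ℝ (gradient f) a - fderiv ℝ (gradient f) b‖ ≤ L2 * ‖a - b‖)
    (x₀ : EuclideanSpace ℝ (Fin d))
    (hΔ : ∀ z : EuclideanSpace ℝ (Fin d), f x₀ - f z ≤ Δ)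
    (x v : ℕ → EuclideanSpace ℝ (Fin d))
    (H : ℕ → EuclideanSpace ℝ (Fin d) →L[ℝ] EuclideanSpace ℝ (Fin d))
    (hx1 : x 1 = x₀)
    (hHapprox : ∀ j : ℕ, 1 ≤ j → ‖H j - fderiv ℝ (gradient f) (x j)‖ ≤ ε₃)
    (hv : ∀ j : ℕ, 1 ≤ j → ‖v j‖ = 1)
    (hmin : ∀ j : ℕ, 1 ≤ j → ∀ u : EuclideanSpace ℝ (Fin d), ‖u‖ = 1 →
      ⟪(H j) u, u⟫ ≥ ⟪(H j) (v j), v j⟫ - max ε₂ ‖gradient f (x j)‖ / 2)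
    (hupd : ∀ j : ℕ, 1 ≤ j →
      x (j + 1) =
        if -(ε₂ ^ 2 / (2 * L2 ^ 2)) * ⟪(H j) (v j), v j⟫ - 5 * ε₂ ^ 3 / (24 * L2 ^ 2) >
            ‖gradient f (x j)‖ ^ 2 / (2 * L1) then
          x j - ((ε₂ / L2) * sgn ⟪gradient f (x j), v j⟫) • v j
        else
          x j - (1 / L1) • gradient f (x j)) :
    ∃ jstar : ℕ, 1 ≤ jstar ∧
      (⟪(H jstar) (v jstar), v jstar⟫ > -ε₂ / 2 ∧ ‖gradient f (x jstar)‖ ≤ ε₁) ∧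
      (∀ i : ℕ, 1 ≤ i → i < jstar →
        ¬(⟪(H i) (v i), v i⟫ > -ε₂ / 2 ∧ ‖gradient f (x i)‖ ≤ ε₁)) ∧
      (jstar : ℝ) ≤ 1 + max (24 * L2 ^ 2 / ε₂ ^ 3) (2 * L1 / ε₁ ^ 2) * Δ ∧
      ‖gradient f (x jstar)‖ ≤ ε₁ ∧
      ∀ u : EuclideanSpace ℝ (Fin d), ‖u‖ = 1 →
        ⟪(fderiv ℝ (gradient f) (x jstar)) u, u⟫ ≥ -(2 * max ε₂ ε₁) := by
  have hfd : Differentiable ℝ f := hf.differentiable two_ne_zero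
  have hgd : Differentiable ℝ (gradient f) := (hf.gradient (n := 1)).differentiable one_ne_zero
  have hcurv : ∀ j, 1 ≤ j → ∀ u : EuclideanSpace ℝ (Fin d), ‖u‖ = 1 →
      |⟪H j u, u⟫ - ⟪fderiv ℝ (gradient f) (x j) u, u⟫| ≤ ε₃ := fun j hj u hu => by
    have h := abs_inner_apply_self_sub_le (H j) (fderiv ℝ (gradient f) (x j)) u
    rw [hu, one_pow, mul_one] at h
    exact h.trans (hHapprox j hj)
  have hδ : 0 < min (ε₂ ^ 3 / (24 * L2 ^ 2)) (ε₁ ^ 2 / (2 * L1)) := by positivity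
  obtain ⟨N, hN1, hstop, hbefore, hNle⟩ := exists_first_index_le_of_descent
    (P := fun j => ⟪H j (v j), v j⟫ > -ε₂ / 2 ∧ ‖gradient f (x j)‖ ≤ ε₁) (F := f ∘ x) hδ
    (fun j hj hcont => by
      rw [Function.comp_apply, Function.comp_apply, hupd j hj]
      exact apply_ncgStep_le_sub_min hL1 hL2 hε₁ hε₂ hfd hgd hglip hHlip (hv j hj)
        (by linarith [abs_le.1 (hcurv j hj (v j) (hv j hj))]) hcont)
    (fun j => by simpa [hx1] using hΔ (x j))
  refine ⟨N, hN1, hstop, hbefore, hNle.trans_eq ?_, hstop.2, fun u hu => ?_⟩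
  · rw [div_eq_mul_inv, inv_min_of_pos (by positivity) (by positivity), inv_div, inv_div,
      mul_comm]
  · linarith [hmin N hN1 u hu, abs_le.1 (hcurv N hN1 u hu), max_le_max (le_refl ε₂) hstop.2,
      le_max_left ε₂ ε₁, hstop.1]

/-- Theorem on iH-NCG-A: convergence guarantee of the iH-NCG-A algorithm,
which uses inexact Hessians `H_j` with `‖H_j − ∇²f(x_j)‖₂ ≤ ε₃ ≤ ε₂/12`. -/
theorem iH_NCG_A_guarantee {d : ℕ}
    (f : EuclideanSpace ℝ (Fin d) → ℝ) (L1 L2 ε₁ ε₂ ε₃ Δ : ℝ)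
    (hL1 : 0 < L1) (hL2 : 0 < L2)
    (hε₁ : 0 < ε₁) (hε₁1 : ε₁ < 1) (hε₂ : 0 < ε₂) (hε₂1 : ε₂ < 1)
    (hε₃0 : 0 ≤ ε₃) (hε₃ : ε₃ ≤ ε₂ / 12)
    (hf : ContDiff ℝ 2 f)
    (hglip : ∀ a b : EuclideanSpace ℝ (Fin d),
      ‖gradient f a - gradient f b‖ ≤ L1 * ‖a - b‖)
    (hHlip : ∀ a b : EuclideanSpace ℝ (Fin d),
      ‖fderiv ℝ (gradient f) a - fderiv ℝ (gradient f) b‖ ≤ L2 * ‖a - b‖)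
    (x₀ : EuclideanSpace ℝ (Fin d))
    (hΔ : ∀ z : EuclideanSpace ℝ (Fin d), f x₀ - f z ≤ Δ)
    (x v : ℕ → EuclideanSpace ℝ (Fin d))
    (H : ℕ → EuclideanSpace ℝ (Fin d) →L[ℝ] EuclideanSpace ℝ (Fin d))
    (hx1 : x 1 = x₀)
    (hHsym : ∀ j : ℕ, 1 ≤ j → ∀ u w : EuclideanSpace ℝ (Fin d),
      ⟪(H j) u, w⟫ = ⟪u, (H j) w⟫)
    (hHapprox : ∀ j : ℕ, 1 ≤ j → ‖H j - fderiv ℝ (gradient f) (x j)‖ ≤ ε₃)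
    (hv : ∀ j : ℕ, 1 ≤ j → ‖v j‖ = 1)
    (hmin : ∀ j : ℕ, 1 ≤ j → ∀ u : EuclideanSpace ℝ (Fin d), ‖u‖ = 1 →
      ⟪(H j) u, u⟫ ≥ ⟪(H j) (v j), v j⟫ - max ε₂ ‖gradient f (x j)‖ / 2)
    (hupd : ∀ j : ℕ, 1 ≤ j →
      x (j + 1) =
        if -(ε₂ ^ 2 / (2 * L2 ^ 2)) * ⟪(H j) (v j), v j⟫ - 5 * ε₂ ^ 3 / (24 * L2 ^ 2) >
            ‖gradient f (x j)‖ ^ 2 / (2 * L1) then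
          x j - ((ε₂ / L2) * sgn ⟪gradient f (x j), v j⟫) • v j
        else
          x j - (1 / L1) • gradient f (x j)) :
    ∃ jstar : ℕ, 1 ≤ jstar ∧
      (⟪(H jstar) (v jstar), v jstar⟫ > -ε₂ / 2 ∧ ‖gradient f (x jstar)‖ ≤ ε₁) ∧
      (∀ i : ℕ, 1 ≤ i → i < jstar →
        ¬(⟪(H i) (v i), v i⟫ > -ε₂ / 2 ∧ ‖gradient f (x i)‖ ≤ ε₁)) ∧
      (jstar : ℝ) ≤ 1 + max (24 * L2 ^ 2 / ε₂ ^ 3) (2 * L1 / ε₁ ^ 2) * Δ ∧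
      ‖gradient f (x jstar)‖ ≤ ε₁ ∧
      ∀ u : EuclideanSpace ℝ (Fin d), ‖u‖ = 1 →
        ⟪(fderiv ℝ (gradient f) (x jstar)) u, u⟫ ≥ -(2 * max ε₂ ε₁) :=
  iH_NCG_A_guarantee_general f L1 L2 ε₁ ε₂ ε₃ Δ hL1 hL2 hε₁ hε₂ hε₃ hf hglip hHlip x₀ hΔ x v H hx1
    hHapprox hv hmin hupd
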